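/- In a triangle-free S_{1,2,2}-free graph G with an induced 5-cycle c_1...c_5 (indices mod 5), with V_i and W_i as above, for any vertices v ∈ V_i, w ∈ W_{i+2}, z ∈ W_{i-2}, the set {v,w,z} is not independent. -/

import Mathlib

/-!
If `v ∈ V_i`, `w ∈ W_{i+2}`, `z ∈ W_{i-2}` were pairwise non-adjacent, then `c_i` together with
the pendant vertex `v` and the paths `c_i c_{i+1} w`, `c_i c_{i-1} z` would be an induced
`S_{1,2,2}`. No distinctness of these six vertices needs checking: in `S_{1,2,2}` distinct
vertices have distinct neighbourhoods, so any map preserving adjacency and non-adjacency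
exactly is injective.
-/

variable {V : Type*}

/-- `S_{1,2,2}`: the 6-vertex tree obtained from the claw `K_{1,3}` by subdividing two
of its edges once each. Centre `0`, pendant vertex `1`, paths `0-2-3` and `0-4-5`. -/
def S122 : SimpleGraph (Fin 6) :=
  SimpleGraph.fromEdgeSet {s(0,1), s(0,2), s(2,3), s(0,4), s(4,5)}

/-- `V_i`: the vertices outside the 5-cycle `c` whose unique neighbour on the cycle is `c i`. -/
def Vset (G : SimpleGraph V) (c : ZMod 5 → V) (i : ZMod 5) : Set V :=
  {v | v ∉ Set.range c ∧ ∀ j, G.Adj v (c j) ↔ j = i}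

/-- `W_i`: the vertices outside the 5-cycle `c` whose neighbours on the cycle are exactly
`c (i-1)` and `c (i+1)`. -/
def Wset (G : SimpleGraph V) (c : ZMod 5 → V) (i : ZMod 5) : Set V :=
  {v | v ∉ Set.range c ∧ ∀ j, G.Adj v (c j) ↔ (j = i - 1 ∨ j = i + 1)}

lemma S122_adj (a b : Fin 6) : S122.Adj a b ↔
    a ≠ b ∧ s(a, b) ∈ ({s(0,1), s(0,2), s(2,3), s(0,4), s(4,5)} : Finset (Sym2 (Fin 6))) := by
  simp [S122, and_comm]

instance : DecidableRel S122.Adj := fun a b => decidable_of_iff' _ (S122_adj a b)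

lemma S122_eq_of_adj_iff : ∀ a b : Fin 6, (∀ x, S122.Adj a x ↔ S122.Adj b x) → a = b := by
  decide

namespace SimpleGraph

variable {W : Type*} {G : SimpleGraph V} {H : SimpleGraph W}

def Embedding.ofAdjIff (hH : ∀ a b, (∀ x, H.Adj a x ↔ H.Adj b x) → a = b) (f : W → V)
    (hf : ∀ a b, G.Adj (f a) (f b) ↔ H.Adj a b) : H ↪g G where
  toFun := f
  inj' a b hab := hH a b fun x => by rw [← hf, ← hf, hab]
  map_rel_iff' := hf _ _

end SimpleGraph

lemma adj_iff_S122_adj {G : SimpleGraph V} {c : ZMod 5 → V}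
    (hC : ∀ i j, G.Adj (c i) (c j) ↔ (j = i + 1 ∨ i = j + 1)) {i : ZMod 5} {v w z : V}
    (hv : v ∈ Vset G c i) (hw : w ∈ Wset G c (i + 2)) (hz : z ∈ Wset G c (i - 2))
    (hvw : ¬ G.Adj v w) (hvz : ¬ G.Adj v z) (hwz : ¬ G.Adj w z) (a b : Fin 6) :
    G.Adj (![c i, v, c (i + 1), w, c (i - 1), z] a) (![c i, v, c (i + 1), w, c (i - 1), z] b) ↔
      S122.Adj a b := by
  have hv_symm := fun j => (G.adj_comm _ _).trans (hv.2 j)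
  have hw_symm := fun j => (G.adj_comm _ _).trans (hw.2 j)
  have hz_symm := fun j => (G.adj_comm _ _).trans (hz.2 j)
  have hwv : ¬ G.Adj w v := fun h => hvw h.symm
  have hzv : ¬ G.Adj z v := fun h => hvz h.symm
  have hzw : ¬ G.Adj z w := fun h => hwz h.symm
  fin_cases a <;> fin_cases b <;>
    simp only [Fin.zero_eta, Fin.mk_one, Fin.reduceFinMk, Matrix.cons_val, G.irrefl, hC,
      hv.2, hv_symm, hw.2, hw_symm, hz.2, hz_symm, hvw, hvz, hwz, hwv, hzv, hzw,
      sub_eq_add_neg, add_assoc, add_right_inj, left_eq_add, add_eq_left] <;>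
    decide

theorem not_independent_triple_general (G : SimpleGraph V)
    (hS : IsEmpty (S122 ↪g G)) (c : ZMod 5 → V)
    (hC : ∀ i j, G.Adj (c i) (c j) ↔ (j = i + 1 ∨ i = j + 1)) :
    ∀ i : ZMod 5, ∀ v ∈ Vset G c i, ∀ w ∈ Wset G c (i + 2), ∀ z ∈ Wset G c (i - 2),
      ¬ (¬ G.Adj v w ∧ ¬ G.Adj v z ∧ ¬ G.Adj w z) := by
  rintro i v hv w hw z hz ⟨hvw, hvz, hwz⟩
  exact hS.false <| .ofAdjIff S122_eq_of_adj_iff _ <|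
    adj_iff_S122_adj hC hv hw hz hvw hvz hwz

/-- For `v ∈ V_i`, `w ∈ W_{i+2}`, `z ∈ W_{i-2}`, the set `{v, w, z}` is not independent. -/
theorem not_independent_triple (G : SimpleGraph V) (htri : G.CliqueFree 3)
    (hS : IsEmpty (S122 ↪g G)) (c : ZMod 5 → V) (hinj : Function.Injective c)
    (hC : ∀ i j, G.Adj (c i) (c j) ↔ (j = i + 1 ∨ i = j + 1)) :
    ∀ i : ZMod 5, ∀ v ∈ Vset G c i, ∀ w ∈ Wset G c (i + 2), ∀ z ∈ Wset G c (i - 2),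
      ¬ (¬ G.Adj v w ∧ ¬ G.Adj v z ∧ ¬ G.Adj w z) :=
  not_independent_triple_general G hS c hC
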